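/- For every combinatorial auction, the core U contains exactly one leximin-optimal element π^BLO, and π^BLO is Pareto optimal in U: there is no π' ∈ U with π'_i ≥ π^BLO_i for all i ∈ N and π'_j > π^BLO_j for some j ∈ N. -/

import Mathlib

/-- The vector `x` sorted in nondecreasing order. -/
noncomputable def sortVec {n : ℕ} (x : Fin n → ℝ) : Fin n → ℝ := x ∘ Tuple.sort x

/-- `x` leximin-dominates `y`. -/
def LexDom {n : ℕ} (x y : Fin n → ℝ) : Prop :=
  ∃ k : Fin n, (∀ j : Fin n, j < k → sortVec x j = sortVec y j) ∧ sortVec y k < sortVec x k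

/-- The core polytope of a coalition value function `w`. -/
def CorePoly {n : ℕ} (w : Finset (Fin n) → ℝ) : Set (Fin n → ℝ) :=
  {π | (∀ i, 0 ≤ π i) ∧ ∀ S : Finset (Fin n), ∑ i ∈ Finset.univ \ S, π i ≤ w Finset.univ - w S}

/-- An allocation to the coalition `S`: pairwise disjoint bundles of items. -/
def IsAlloc {n m : ℕ} (S : Finset (Fin n)) (a : Fin n → Finset (Fin m)) : Prop :=
  ∀ i ∈ S, ∀ j ∈ S, i ≠ j → Disjoint (a i) (a j)

/-- The coalition value: the maximum total value over allocations to `S`. -/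
noncomputable def coalW {n m : ℕ} (v : Fin n → Finset (Fin m) → ℝ) (S : Finset (Fin n)) : ℝ :=
  sSup (Set.image (fun a : Fin n → Finset (Fin m) => ∑ i ∈ S, v i (a i)) {a | IsAlloc S a})

/-- The set of winners: bidders whose removal strictly decreases the optimal welfare. -/
noncomputable def winners {n m : ℕ} (v : Fin n → Finset (Fin m) → ℝ) : Finset (Fin n) :=
  @Finset.filter _ (fun i => coalW v (Finset.univ \ {i}) < coalW v Finset.univ)
    (Classical.decPred _) Finset.univ

/-!
The core is compact and convex, and it contains `0` because nonnegative valuations make the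
coalition value monotone. On a compact set a leximin-optimal point is found by maximizing the
smallest sorted entry, then the second smallest among the maximizers, and so on: sorted entries
depend continuously on the vector, so every stage stays compact and nonempty.

Two leximin-optimal points have the same sorted vector, as the leximin order is total on sorted
vectors. If they differ, let `t` be the least value either takes at a coordinate where they
disagree: their midpoint, which lies in the core by convexity, has the same entries below `t`,
but takes the value `t` at fewer coordinates, so it leximin-dominates them. A Pareto improvement
has pointwise larger sorted entries and a strictly larger sum, so it leximin-dominates the point
it improves.
-/

open Finset

variable {n : ℕ}

theorem card_filter_sortVec (x : Fin n → ℝ) (p : ℝ → Prop) [DecidablePred p] :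
    #{j | p (sortVec x j)} = #{i | p (x i)} :=
  card_equiv (Tuple.sort x) (fun i => by rw [mem_filter]; simp [sortVec])

theorem sortVec_le_iff (x : Fin n → ℝ) (k : Fin n) (c : ℝ) :
    sortVec x k ≤ c ↔ (k : ℕ) < #{i | x i ≤ c} := by
  have hmono : Monotone (sortVec x) := Tuple.monotone_sort x
  rw [← card_filter_sortVec x (· ≤ c)]
  constructor
  · intro h
    have hsub : Iic k ⊆ ({j | sortVec x j ≤ c} : Finset (Fin n)) := fun j hj =>
      mem_filter.mpr ⟨mem_univ j, (hmono (mem_Iic.mp hj)).trans h⟩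
    simpa using card_le_card hsub
  · intro h
    by_contra! hc
    have hsub : ({j | sortVec x j ≤ c} : Finset (Fin n)) ⊆ Iio k := fun j hj => by
      simp only [mem_filter, mem_univ, true_and] at hj
      exact mem_Iio.mpr (lt_of_not_ge fun hkj => (hc.trans_le (hmono hkj)).not_ge hj)
    have := card_le_card hsub
    simp only [Fin.card_Iio] at this
    omega

theorem sortVec_le_sortVec_add {x y : Fin n → ℝ} {d : ℝ} (h : ∀ i, x i ≤ y i + d)
    (k : Fin n) : sortVec x k ≤ sortVec y k + d := by
  rw [sortVec_le_iff]
  refine ((sortVec_le_iff y k _).mp le_rfl).trans_le (card_le_card fun i hi => ?_)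
  simp only [mem_filter, mem_univ, true_and] at hi ⊢
  linarith [h i]

theorem continuous_sortVec_apply (k : Fin n) : Continuous fun x : Fin n → ℝ => sortVec x k :=
  (LipschitzWith.of_le_add fun x y => sortVec_le_sortVec_add (fun i => by
    have := dist_le_pi_dist x y i
    rw [Real.dist_eq, abs_sub_le_iff] at this
    linarith) k).continuous

theorem sum_sortVec (x : Fin n → ℝ) : ∑ j, sortVec x j = ∑ i, x i :=
  Equiv.sum_comp (Tuple.sort x) x

theorem lexDom_iff {x y : Fin n → ℝ} : LexDom x y ↔ toLex (sortVec y) < toLex (sortVec x) :=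
  exists_congr fun _ => and_congr_left' (forall₂_congr fun _ _ => eq_comm)

theorem lexDom_trichotomy (x y : Fin n → ℝ) :
    sortVec x = sortVec y ∨ LexDom x y ∨ LexDom y x := by
  rw [lexDom_iff, lexDom_iff]
  rcases lt_trichotomy (toLex (sortVec x)) (toLex (sortVec y)) with h | h | h
  · exact Or.inr (Or.inr h)
  · exact Or.inl (toLex.injective h)
  · exact Or.inr (Or.inl h)

theorem lexDom_of_card_filter_le {x z : Fin n → ℝ} (t : ℝ)
    (hbelow : ∀ c < t, #{i | z i ≤ c} = #{i | x i ≤ c})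
    (hat : #{i | z i ≤ t} < #{i | x i ≤ t}) : LexDom z x := by
  have agree : ∀ {u w : Fin n → ℝ}, (∀ c < t, #{i | u i ≤ c} = #{i | w i ≤ c}) →
      ∀ j, sortVec u j ≤ t → sortVec u j ≤ sortVec w j := by
    intro u w huw j hu
    rcases le_or_gt t (sortVec w j) with hw | hw
    · exact hu.trans hw
    · rw [sortVec_le_iff, huw _ hw]
      exact (sortVec_le_iff w j _).mp le_rfl
  have hk : #{i | z i ≤ t} < n := hat.trans_le ((card_filter_le _ _).trans_eq (card_fin n))
  set k : Fin n := ⟨_, hk⟩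
  refine ⟨k, fun j hj => ?_, ?_⟩
  · have hzj : sortVec z j ≤ t := (sortVec_le_iff z j t).mpr hj
    have hxj : sortVec x j ≤ t :=
      (sortVec_le_iff x j t).mpr ((show (j : ℕ) < _ from hj).trans hat)
    exact le_antisymm (agree hbelow j hzj) (agree (fun c hc => (hbelow c hc).symm) j hxj)
  · calc sortVec x k ≤ t := (sortVec_le_iff x k t).mpr hat
      _ < sortVec z k := not_le.mp fun h => lt_irrefl _ ((sortVec_le_iff z k t).mp h)

theorem lexDom_midpoint {x y : Fin n → ℝ} (hs : sortVec x = sortVec y) (hne : x ≠ y) :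
    LexDom (midpoint ℝ x y) x := by
  have hz : ∀ i, midpoint ℝ x y i = (x i + y i) / 2 := fun i => by
    rw [pi_midpoint_apply, midpoint_eq_smul_add, smul_eq_mul, invOf_eq_inv]
    ring
  set z := midpoint ℝ x y
  have hD : ({i | x i ≠ y i} : Finset (Fin n)).Nonempty := by
    obtain ⟨i, hi⟩ := Function.ne_iff.mp hne
    exact ⟨i, by simpa using hi⟩
  set t := ({i | x i ≠ y i} : Finset (Fin n)).inf' hD fun i => min (x i) (y i)
  have ht : ∀ i, x i ≠ y i → t < z i ∧ t ≤ x i ∧ t ≤ y i := by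
    intro i hi
    have hmem : i ∈ ({i | x i ≠ y i} : Finset (Fin n)) := by simpa using hi
    have := le_min_iff.mp (inf'_le (fun i => min (x i) (y i)) hmem)
    refine ⟨?_, this⟩
    rw [hz]
    rcases hi.lt_or_gt with h | h <;> linarith
  have hz_le : ∀ c ≤ t, ∀ i, z i ≤ c ↔ x i = y i ∧ x i ≤ c := by
    intro c hc i
    by_cases hi : x i = y i
    · simp [hz, hi]
    · simp only [hi, false_and, iff_false, not_le]
      exact hc.trans_lt (ht i hi).1
  apply lexDom_of_card_filter_le t
  · intro c hc
    congr 1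
    ext i
    simp only [mem_filter, mem_univ, true_and, hz_le c hc.le]
    by_cases hi : x i = y i
    · simp [hi]
    · simp only [hi, false_and, false_iff, not_le]
      exact hc.trans_le (ht i hi).2.1
  · obtain ⟨i₀, hi₀, hmin⟩ := exists_mem_eq_inf' hD fun i => min (x i) (y i)
    have hi₀ : x i₀ ≠ y i₀ := by simpa using hi₀
    have card_lt : ∀ w ∈ ({x, y} : Set (Fin n → ℝ)), w i₀ ≤ t →
        #{i | z i ≤ t} < #{i | w i ≤ t} := by
      intro w hw hwi₀
      refine card_lt_card ((ssubset_iff_of_subset fun i hi => ?_).mpr ⟨i₀, ?_, ?_⟩)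
      · simp only [mem_filter, mem_univ, true_and, hz_le t le_rfl] at hi ⊢
        rcases hw with rfl | rfl
        · exact hi.2
        · exact hi.1 ▸ hi.2
      · simpa using hwi₀
      · simpa [hz_le t le_rfl] using fun h => absurd h hi₀
    have hcard : #{i | y i ≤ t} = #{i | x i ≤ t} := by
      rw [← card_filter_sortVec y (· ≤ t), ← hs]
      exact card_filter_sortVec x (· ≤ t)
    rcases min_le_iff.mp hmin.ge with h | h
    · exact card_lt x (by simp) h
    · exact hcard ▸ card_lt y (by simp) h

def IsLeximinOptimal (U : Set (Fin n → ℝ)) (π : Fin n → ℝ) : Prop :=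
  π ∈ U ∧ ∀ π' ∈ U, ¬ LexDom π' π

theorem IsLeximinOptimal.eq {U : Set (Fin n → ℝ)} (hU : Convex ℝ U) {x y : Fin n → ℝ}
    (hx : IsLeximinOptimal U x) (hy : IsLeximinOptimal U y) : x = y := by
  rcases lexDom_trichotomy x y with hs | hxy | hyx
  · by_contra hne
    exact hx.2 _ (hU.midpoint_mem hx.1 hy.1) (lexDom_midpoint hs hne)
  · exact absurd hxy (hy.2 x hx.1)
  · exact absurd hyx (hx.2 y hy.1)

theorem IsLeximinOptimal.eq_of_le {U : Set (Fin n → ℝ)} {π π' : Fin n → ℝ}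
    (hπ : IsLeximinOptimal U π) (hπ' : π' ∈ U) (hle : π ≤ π') : π' = π := by
  by_contra hne
  obtain ⟨j, hj⟩ := Function.ne_iff.mp hne
  rcases lexDom_trichotomy π' π with hs | hdom | ⟨k, -, hk⟩
  · have hsum : ∑ i, π i < ∑ i, π' i :=
      sum_lt_sum (fun i _ => hle i) ⟨j, mem_univ j, (hle j).lt_of_ne' hj⟩
    rw [← sum_sortVec, ← sum_sortVec π', hs] at hsum
    exact lt_irrefl _ hsum
  · exact hπ.2 π' hπ' hdom
  · have hsort := sortVec_le_sortVec_add (d := 0) (fun i => by simpa using hle i) k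
    exact hk.not_ge (by simpa using hsort)

section ArgmaxSet

variable {X β : Type*} [TopologicalSpace X] [LinearOrder β] [TopologicalSpace β]
  [OrderClosedTopology β]

def argmaxSet (f : X → β) (K : Set X) : Set X := {x ∈ K | ∀ y ∈ K, f y ≤ f x}

theorem isCompact_argmaxSet {f : X → β} (hf : Continuous f) {K : Set X} (hK : IsCompact K) :
    IsCompact (argmaxSet f K) := by
  have : argmaxSet f K = K ∩ ⋂ y ∈ K, {x | f y ≤ f x} := by
    ext x
    simp [argmaxSet]
  rw [this]
  exact hK.inter_right (isClosed_biInter fun y _ => isClosed_le continuous_const hf)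

theorem argmaxSet_nonempty {f : X → β} (hf : Continuous f) {K : Set X}
    (hK : IsCompact K) (hne : K.Nonempty) : (argmaxSet f K).Nonempty := by
  obtain ⟨x, hx, hmax⟩ := hK.exists_isMaxOn hne hf.continuousOn
  exact ⟨x, hx, fun y hy => hmax hy⟩

end ArgmaxSet

noncomputable def leximinStage (U : Set (Fin n → ℝ)) : ℕ → Set (Fin n → ℝ)
  | 0 => U
  | k + 1 =>
    if h : k < n then argmaxSet (fun x => sortVec x ⟨k, h⟩) (leximinStage U k)
    else leximinStage U k

theorem leximinStage_succ_of_lt (U : Set (Fin n → ℝ)) {k : ℕ} (h : k < n) :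
    leximinStage U (k + 1) = argmaxSet (fun x => sortVec x ⟨k, h⟩) (leximinStage U k) := by
  rw [leximinStage, dif_pos h]

theorem leximinStage_antitone (U : Set (Fin n → ℝ)) : Antitone (leximinStage U) := by
  refine antitone_nat_of_succ_le fun k => ?_
  by_cases h : k < n
  · rw [leximinStage_succ_of_lt U h]
    exact fun x hx => hx.1
  · rw [leximinStage, dif_neg h]

theorem isCompact_leximinStage {U : Set (Fin n → ℝ)} (hU : IsCompact U) (k : ℕ) :
    IsCompact (leximinStage U k) := by
  induction k with
  | zero => exact hU
  | succ k ih =>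
    by_cases h : k < n
    · rw [leximinStage_succ_of_lt U h]
      exact isCompact_argmaxSet (continuous_sortVec_apply _) ih
    · rwa [leximinStage, dif_neg h]

theorem leximinStage_nonempty {U : Set (Fin n → ℝ)} (hU : IsCompact U) (hne : U.Nonempty)
    (k : ℕ) : (leximinStage U k).Nonempty := by
  induction k with
  | zero => exact hne
  | succ k ih =>
    by_cases h : k < n
    · rw [leximinStage_succ_of_lt U h]
      exact argmaxSet_nonempty (continuous_sortVec_apply _) (isCompact_leximinStage hU k) ih
    · rwa [leximinStage, dif_neg h]

theorem mem_leximinStage_of_sortVec_eq {U : Set (Fin n → ℝ)} {k : ℕ} {π π' : Fin n → ℝ}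
    (hπ : π ∈ leximinStage U k) (hπ' : π' ∈ U)
    (h : ∀ j : Fin n, (j : ℕ) < k → sortVec π' j = sortVec π j) : π' ∈ leximinStage U k := by
  induction k with
  | zero => exact hπ'
  | succ k ih =>
    have hk : π ∈ leximinStage U k := leximinStage_antitone U k.le_succ hπ
    have ih' := ih hk fun j hj => h j (hj.trans k.lt_succ_self)
    by_cases hn : k < n
    · rw [leximinStage_succ_of_lt U hn] at hπ ⊢
      refine ⟨ih', fun y hy => ?_⟩
      show sortVec y ⟨k, hn⟩ ≤ sortVec π' ⟨k, hn⟩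
      rw [h ⟨k, hn⟩ k.lt_succ_self]
      exact hπ.2 y hy
    · rwa [leximinStage, dif_neg hn]

theorem exists_isLeximinOptimal {U : Set (Fin n → ℝ)} (hU : IsCompact U) (hne : U.Nonempty) :
    ∃ π, IsLeximinOptimal U π := by
  obtain ⟨π, hπ⟩ := leximinStage_nonempty hU hne n
  refine ⟨π, leximinStage_antitone U n.zero_le hπ, ?_⟩
  rintro π' hπ' ⟨k, hagree, hlt⟩
  have hπk : π ∈ leximinStage U (k + 1) := leximinStage_antitone U k.isLt hπ
  rw [leximinStage_succ_of_lt U k.isLt] at hπk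
  have hπ'k : π' ∈ leximinStage U k :=
    mem_leximinStage_of_sortVec_eq hπk.1 hπ' fun j hj => hagree j hj
  exact hlt.not_ge (hπk.2 π' hπ'k)

section Core

variable {m : ℕ} (v : Fin n → Finset (Fin m) → ℝ)

theorem le_coalW {S : Finset (Fin n)} {a : Fin n → Finset (Fin m)} (ha : IsAlloc S a) :
    ∑ i ∈ S, v i (a i) ≤ coalW v S :=
  le_csSup ((Set.toFinite _).image _).bddAbove ⟨a, ha, rfl⟩

theorem coalW_mono (hv : ∀ i, 0 ≤ v i ∅) {S T : Finset (Fin n)} (hST : S ⊆ T) :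
    coalW v S ≤ coalW v T := by
  classical
  refine csSup_le ⟨_, fun _ => ∅, fun _ _ _ _ _ => disjoint_bot_left, rfl⟩ ?_
  rintro _ ⟨a, ha, rfl⟩
  let a' : Fin n → Finset (Fin m) := fun i => if i ∈ S then a i else ∅
  have ha' : IsAlloc T a' := by
    intro i _ j _ hij
    by_cases hi : i ∈ S
    · by_cases hj : j ∈ S
      · simpa [a', hi, hj] using ha i hi j hj hij
      · simp [a', hj]
    · simp [a', hi]
  calc ∑ i ∈ S, v i (a i) = ∑ i ∈ S, v i (a' i) := sum_congr rfl fun i hi => by simp [a', hi]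
    _ ≤ ∑ i ∈ T, v i (a' i) :=
      sum_le_sum_of_subset_of_nonneg hST fun i _ hi => by simp [a', hi, hv]
    _ ≤ coalW v T := le_coalW v ha'

end Core

theorem zero_mem_corePoly {w : Finset (Fin n) → ℝ} (hw : ∀ S, w S ≤ w univ) :
    0 ∈ CorePoly w :=
  ⟨fun _ => le_rfl, fun S => by simpa using hw S⟩

theorem convex_corePoly (w : Finset (Fin n) → ℝ) : Convex ℝ (CorePoly w) := by
  intro x hx y hy a b ha hb hab
  refine ⟨fun i => add_nonneg (mul_nonneg ha (hx.1 i)) (mul_nonneg hb (hy.1 i)), fun S => ?_⟩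
  simp only [Pi.add_apply, Pi.smul_apply, smul_eq_mul, sum_add_distrib, ← mul_sum]
  calc a * ∑ i ∈ univ \ S, x i + b * ∑ i ∈ univ \ S, y i
      ≤ a * (w univ - w S) + b * (w univ - w S) :=
        add_le_add (mul_le_mul_of_nonneg_left (hx.2 S) ha)
          (mul_le_mul_of_nonneg_left (hy.2 S) hb)
    _ = w univ - w S := by rw [← add_mul, hab, one_mul]

theorem corePoly_subset_Icc (w : Finset (Fin n) → ℝ) :
    CorePoly w ⊆ Set.Icc 0 fun i => w univ - w (univ \ {i}) :=
  fun π hπ => ⟨hπ.1, fun i => by simpa using hπ.2 (univ \ {i})⟩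

theorem isCompact_corePoly (w : Finset (Fin n) → ℝ) : IsCompact (CorePoly w) := by
  have hclosed : IsClosed (CorePoly w) := by
    simp only [CorePoly, Set.ofPred_and, Set.ofPred_forall]
    exact (isClosed_iInter fun i => isClosed_le continuous_const (continuous_apply i)).inter
      (isClosed_iInter fun S => isClosed_le
        (continuous_finsetSum _ fun i _ => continuous_apply i) continuous_const)
  exact isCompact_Icc.of_isClosed_subset hclosed (corePoly_subset_Icc w)

theorem blo_exists_unique_pareto_general (n m : ℕ) (v : Fin n → Finset (Fin m) → ℝ)
    (hvnn : ∀ i S, 0 ≤ v i S) :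
    (∃! π : Fin n → ℝ,
        π ∈ CorePoly (coalW v) ∧ ∀ π' ∈ CorePoly (coalW v), ¬ LexDom π' π) ∧
    ∀ π : Fin n → ℝ,
      (π ∈ CorePoly (coalW v) ∧ ∀ π' ∈ CorePoly (coalW v), ¬ LexDom π' π) →
      ¬ ∃ π' ∈ CorePoly (coalW v), (∀ i, π i ≤ π' i) ∧ ∃ j, π j < π' j := by
  have hne : (CorePoly (coalW v)).Nonempty :=
    ⟨0, zero_mem_corePoly fun S => coalW_mono v (fun i => hvnn i ∅) (subset_univ S)⟩
  obtain ⟨π, hπ⟩ := exists_isLeximinOptimal (isCompact_corePoly _) hne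
  refine ⟨⟨π, hπ, fun ρ hρ => IsLeximinOptimal.eq (convex_corePoly _) hρ hπ⟩, ?_⟩
  rintro ρ hρ ⟨π', hπ', hle, j, hj⟩
  exact hj.ne' (congrFun (IsLeximinOptimal.eq_of_le hρ hπ' hle) j)

/-- The core of a CA contains exactly one leximin-optimal element, and it is Pareto optimal. -/
theorem blo_exists_unique_pareto (n m : ℕ) (v : Fin n → Finset (Fin m) → ℝ)
    (hv0 : ∀ i, v i ∅ = 0) (hvnn : ∀ i S, 0 ≤ v i S) :
    (∃! π : Fin n → ℝ,
        π ∈ CorePoly (coalW v) ∧ ∀ π' ∈ CorePoly (coalW v), ¬ LexDom π' π) ∧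
    ∀ π : Fin n → ℝ,
      (π ∈ CorePoly (coalW v) ∧ ∀ π' ∈ CorePoly (coalW v), ¬ LexDom π' π) →
      ¬ ∃ π' ∈ CorePoly (coalW v), (∀ i, π i ≤ π' i) ∧ ∃ j, π j < π' j :=
  blo_exists_unique_pareto_general n m v hvnn
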